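/- arXiv:2110.13019 — 5 statements merged into one kernel-verified Lean document; each statement's English description precedes it below -/
import Mathlib

section
/- Let W be an N×N discrete matrix weight, let j ∈ ℤ, and let F and F̃ be N×N matrix polynomials satisfying the weak Pearson equation F(x−j)W(x−j) = W(x)F̃(x)^* for all x ∈ ℤ. Then for all N×N matrix polynomials P and Q the two series ∑_{x=0}^∞ P(x+j)F(x)W(x)Q(x)^* and ∑_{x=0}^∞ P(x)W(x)(Q(x−j)F̃(x))^* converge entrywise absolutely and are equal; that is, ⟨P·D_j, Q⟩_W = ⟨P, Q·D_j^†⟩_W, where (P·D_j)(x) = P(x+j)F(x) and (Q·D_j^†)(x) = Q(x−j)F̃(x). -/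
/-!
Substituting `y = x + j` turns the left summand into `P(y) F(y - j) W(y - j) Q(y - j)^*`, and the
weak Pearson equation rewrites `F(y - j) W(y - j)` as `W(y) F̃(y)^*`, which gives the right summand
at `y`. So both series are sums over `ℤ` of one function supported in `y ≥ max 0 j`: it vanishes
for `y < 0` because `W` does, and for `y < j` because there `W(y) F̃(y)^* = F(y - j) W(y - j) = 0`.
Absolute convergence holds because the entries of polynomials in `x` grow like powers of `x`, while
`W` has finite moments of all orders.
-/

open scoped BigOperators ComplexOrder
open Matrix Polynomial Filter

noncomputable section

/-- The space of `N × N` complex matrices. -/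
abbrev Mat (N : ℕ) := Matrix (Fin N) (Fin N) ℂ

/-- Evaluation of a matrix polynomial at a (scalar) complex number. -/
def matEval {N : ℕ} (P : Polynomial (Mat N)) (z : ℂ) : Mat N :=
  P.eval (z • (1 : Mat N))

/-- Matrix-valued inner product associated to a discrete matrix weight:
`⟨P,Q⟩_W = ∑_{x=0}^∞ P(x) W(x) Q(x)^*`. -/
def innerW {N : ℕ} (W : ℤ → Mat N) (P Q : Polynomial (Mat N)) : Mat N :=
  ∑' x : ℕ, matEval P x * W x * (matEval Q x)ᴴ

/-- `W : ℤ → M_N(ℂ)` is an `N × N` discrete matrix weight: positive definite on ℕ,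
zero on negative integers, with entrywise absolutely convergent moments of all orders. -/
structure IsWeight {N : ℕ} (W : ℤ → Mat N) : Prop where
  posDef : ∀ x : ℕ, (W (x : ℤ)).PosDef
  neg : ∀ x : ℤ, x < 0 → W x = 0
  moments : ∀ k : ℕ, ∀ i j : Fin N, Summable fun x : ℕ => (x : ℝ) ^ k * ‖W (x : ℤ) i j‖

/-- `P` is the monic orthogonal sequence of the discrete matrix weight `W`. -/
structure IsMOS {N : ℕ} (W : ℤ → Mat N) (P : ℕ → Polynomial (Mat N)) : Prop where
  monic : ∀ n, (P n).Monic
  deg : ∀ n, (P n).natDegree = n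
  orth : ∀ m n, m ≠ n → innerW W (P m) (P n) = 0

/-- Left evaluation `Q⟦M⟧ = ∑_k M^k * A_k` of a matrix polynomial at a matrix. -/
def leftEval {N : ℕ} (Q : Polynomial (Mat N)) (M : Mat N) : Mat N :=
  Q.sum fun k a => M ^ k * a

/-- The block Vandermonde condition for an eigenvalue function `ρ`. -/
def BlockVdm {N : ℕ} (ρ : ℕ → Mat N) : Prop :=
  ∀ x : ℕ, ∃ k : Fin (x + 1) → ℕ,
    IsUnit (Matrix.of fun p q : Fin (x + 1) × Fin N => (ρ (k p.1) ^ (q.1 : ℕ)) p.2 q.2)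

/-- The backward difference operator `(G·∇)(x) = G(x) - G(x-1)`. -/
def nabla {N : ℕ} (G : ℤ → Mat N) : ℤ → Mat N := fun x => G x - G (x - 1)

open Asymptotics

lemma matEval_apply {N : ℕ} (P : Polynomial (Mat N)) (z : ℂ) (i k : Fin N) :
    matEval P z i k = ∑ n ∈ P.support, P.coeff n i k * z ^ n := by
  simp only [matEval, eval_eq_sum, Polynomial.sum_def, _root_.smul_pow, one_pow, mul_smul_comm,
    mul_one, Matrix.sum_apply, Matrix.smul_apply, smul_eq_mul, mul_comm]

lemma isBigO_natCast_add_const (c : ℂ) :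
    (fun x : ℕ => (x : ℂ) + c) =O[atTop] fun x : ℕ => (x : ℝ) := by
  refine IsBigO.of_bound (1 + ‖c‖) ?_
  filter_upwards [eventually_ge_atTop 1] with x hx
  have hx' : (1 : ℝ) ≤ x := by exact_mod_cast hx
  calc ‖(x : ℂ) + c‖ ≤ x + ‖c‖ := by simpa using norm_add_le (x : ℂ) c
    _ ≤ (1 + ‖c‖) * ‖(x : ℝ)‖ := by
      rw [Real.norm_natCast]; nlinarith [norm_nonneg c]

lemma isBigO_natCast_pow_pow {m n : ℕ} (h : m ≤ n) :
    (fun x : ℕ => (x : ℝ) ^ m) =O[atTop] fun x : ℕ => (x : ℝ) ^ n := by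
  refine IsBigO.of_bound 1 ?_
  filter_upwards [eventually_ge_atTop 1] with x hx
  have hx' : (1 : ℝ) ≤ x := by exact_mod_cast hx
  simp only [norm_pow, Real.norm_natCast, one_mul]
  exact pow_le_pow_right₀ hx' h

lemma isBigO_matEval_apply {N : ℕ} (P : Polynomial (Mat N)) (c : ℂ) (i k : Fin N) :
    (fun x : ℕ => matEval P ((x : ℂ) + c) i k) =O[atTop]
      fun x : ℕ => (x : ℝ) ^ P.natDegree := by
  simp only [matEval_apply]
  refine IsBigO.fun_sum fun n hn => ?_
  have hpow := ((isBigO_natCast_add_const c).pow n).trans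
    (isBigO_natCast_pow_pow (le_natDegree_of_mem_supp n hn))
  exact hpow.const_mul_left _

section Growth

variable {N : ℕ} {A B : ℕ → Mat N} {a b : ℕ}

lemma isBigO_mul_apply (hA : ∀ i k, (fun x => A x i k) =O[atTop] fun x : ℕ => (x : ℝ) ^ a)
    (hB : ∀ i k, (fun x => B x i k) =O[atTop] fun x : ℕ => (x : ℝ) ^ b) (i k : Fin N) :
    (fun x => (A x * B x) i k) =O[atTop] fun x : ℕ => (x : ℝ) ^ (a + b) := by
  simp only [Matrix.mul_apply, pow_add]
  exact IsBigO.fun_sum fun l _ => (hA i l).mul (hB l k)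

lemma isBigO_conjTranspose_apply
    (hA : ∀ i k, (fun x => A x i k) =O[atTop] fun x : ℕ => (x : ℝ) ^ a) (i k : Fin N) :
    (fun x => (A x)ᴴ i k) =O[atTop] fun x : ℕ => (x : ℝ) ^ a := by
  refine IsBigO.of_norm_left ?_
  simpa only [Matrix.conjTranspose_apply, norm_star] using (hA k i).norm_left

lemma IsWeight.summable_norm_mul_mul_apply {W : ℤ → Mat N} (hW : IsWeight W)
    (hA : ∀ i k, (fun x => A x i k) =O[atTop] fun x : ℕ => (x : ℝ) ^ a)
    (hB : ∀ i k, (fun x => B x i k) =O[atTop] fun x : ℕ => (x : ℝ) ^ b) (i k : Fin N) :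
    Summable fun x : ℕ => ‖(A x * W x * B x) i k‖ := by
  refine summable_norm_iff.mpr ?_
  simp only [Matrix.mul_apply, Finset.sum_mul]
  refine summable_sum fun l _ => summable_sum fun m _ => summable_of_isBigO_nat
    (hW.moments (a + b) m l) ?_
  have h := ((hA i m).mul (isBigO_refl (fun x : ℕ => W x m l) atTop).norm_right).mul (hB l k)
  exact h.congr_right fun x => by ring

end Growth

lemma tsum_natCast_add_eq_tsum_natCast {M : Type*} [AddCommMonoid M] [TopologicalSpace M]
    {f : ℤ → M} {j : ℤ} (hf : ∀ y < max 0 j, f y = 0) :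
    ∑' x : ℕ, f (x + j) = ∑' x : ℕ, f x := by
  have hsupp : ∀ y ∈ Function.support f, 0 ≤ y ∧ j ≤ y := fun y hy => by
    by_contra h
    exact hy (hf y (by omega))
  have hshift : Function.Injective fun x : ℕ => (x : ℤ) + j := fun a b h => by simpa using h
  rw [hshift.tsum_eq, Nat.cast_injective.tsum_eq]
  · exact fun y hy => ⟨y.toNat, Int.toNat_of_nonneg (hsupp y hy).1⟩
  · exact fun y hy =>
      ⟨(y - j).toNat, by simp [Int.toNat_of_nonneg (sub_nonneg.2 (hsupp y hy).2)]⟩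

lemma tsum_weak_pearson_eq {N : ℕ} {W : ℤ → Mat N} (hW_neg : ∀ x : ℤ, x < 0 → W x = 0)
    {j : ℤ} {F Ft : Polynomial (Mat N)}
    (pearson : ∀ x : ℤ, matEval F ((x : ℂ) - (j : ℂ)) * W (x - j)
      = W x * (matEval Ft (x : ℂ))ᴴ)
    (P Q : Polynomial (Mat N)) :
    (∑' x : ℕ, matEval P ((x : ℂ) + (j : ℂ)) * matEval F (x : ℂ) * W (x : ℤ)
        * (matEval Q (x : ℂ))ᴴ)
      = ∑' x : ℕ, matEval P (x : ℂ) * W (x : ℤ)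
          * (matEval Q ((x : ℂ) - (j : ℂ)) * matEval Ft (x : ℂ))ᴴ := by
  set g : ℤ → Mat N := fun y =>
    matEval P (y : ℂ) * (W y * (matEval Ft (y : ℂ))ᴴ) * (matEval Q ((y : ℂ) - (j : ℂ)))ᴴ
  have hg_shift : ∀ x : ℤ, g (x + j) =
      matEval P ((x : ℂ) + (j : ℂ)) * matEval F (x : ℂ) * W x * (matEval Q (x : ℂ))ᴴ := by
    intro x
    have h := pearson (x + j)
    simp only [Int.cast_add, add_sub_cancel_right] at h
    simp only [g, Int.cast_add, add_sub_cancel_right, ← h]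
    simp only [mul_assoc]
  have hg_zero : ∀ y < max 0 j, g y = 0 := by
    intro y hy
    rcases lt_max_iff.mp hy with hy0 | hyj
    · simp only [g, hW_neg y hy0, zero_mul, mul_zero]
    · simp only [g, ← pearson y, hW_neg (y - j) (by omega), mul_zero, zero_mul]
  calc _ = ∑' x : ℕ, g (x + j) := by simp only [hg_shift, Int.cast_natCast]
    _ = ∑' x : ℕ, g x := tsum_natCast_add_eq_tsum_natCast hg_zero
    _ = _ := by simp only [g, Int.cast_natCast, Matrix.conjTranspose_mul, mul_assoc]

/-- a weak Pearson equation yields an adjoint pair of first order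
difference operators. -/
theorem weak_pearson_adjoint {N : ℕ} (W : ℤ → Mat N) (hW : IsWeight W) (j : ℤ)
    (F Ft : Polynomial (Mat N))
    (pearson : ∀ x : ℤ, matEval F ((x : ℂ) - (j : ℂ)) * W (x - j)
      = W x * (matEval Ft (x : ℂ))ᴴ)
    (P Q : Polynomial (Mat N)) :
    (∀ i k : Fin N, Summable fun x : ℕ =>
        ‖(matEval P ((x : ℂ) + (j : ℂ)) * matEval F (x : ℂ) * W (x : ℤ)
            * (matEval Q (x : ℂ))ᴴ) i k‖) ∧
    (∀ i k : Fin N, Summable fun x : ℕ =>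
        ‖(matEval P (x : ℂ) * W (x : ℤ)
            * (matEval Q ((x : ℂ) - (j : ℂ)) * matEval Ft (x : ℂ))ᴴ) i k‖) ∧
    (∑' x : ℕ, matEval P ((x : ℂ) + (j : ℂ)) * matEval F (x : ℂ) * W (x : ℤ)
        * (matEval Q (x : ℂ))ᴴ)
      = ∑' x : ℕ, matEval P (x : ℂ) * W (x : ℤ)
          * (matEval Q ((x : ℂ) - (j : ℂ)) * matEval Ft (x : ℂ))ᴴ := by
  have growth_natCast : ∀ (R : Polynomial (Mat N)) (i k : Fin N),
      (fun x : ℕ => matEval R (x : ℂ) i k) =O[atTop]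
        fun x : ℕ => (x : ℝ) ^ R.natDegree := by
    simpa using fun R => isBigO_matEval_apply R 0
  have growth_sub : ∀ (i k : Fin N), (fun x : ℕ => matEval Q ((x : ℂ) - j) i k) =O[atTop]
      fun x : ℕ => (x : ℝ) ^ Q.natDegree := by
    simpa [sub_eq_add_neg] using isBigO_matEval_apply Q (-j)
  exact ⟨hW.summable_norm_mul_mul_apply
      (isBigO_mul_apply (isBigO_matEval_apply P j) (growth_natCast F))
      (isBigO_conjTranspose_apply (growth_natCast Q)),
    hW.summable_norm_mul_mul_apply (growth_natCast P)
      (isBigO_conjTranspose_apply (isBigO_mul_apply growth_sub (growth_natCast Ft))),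
    tsum_weak_pearson_eq hW.neg pearson P Q⟩
end
end

section
/- Let (W^{(λ)})_{λ∈ℕ₀} be a family of N×N discrete matrix weights satisfying strong Pearson equations, with monic orthogonal sequences (P_n^{(λ)}), squared norms H_n^{(λ)}, and matrices G_n^{(λ)} = −(n−1)(K_2^{(λ)})^* − (J_1^{(λ)})^*. Then for all n, λ ∈ ℕ₀, (n+1)·H_n^{(λ+1)} = H_{n+1}^{(λ)}·(G_{n+1}^{(λ)})^*. Consequently every matrix G_n^{(λ)} with n ≥ 1 is invertible, and for all n, λ ∈ ℕ₀: H_n^{(λ)}·(G_n^{(λ)})^*·(G_{n−1}^{(λ+1)})^* ⋯ (G_1^{(λ+n−1)})^* = n!·H_0^{(λ+n)}. -/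
open scoped BigOperators ComplexOrder
open Matrix Polynomial Filter

noncomputable section

/-!
Put `p = P^{(λ)}_{n+1}` and `Q = P^{(λ+1)}_n`. Summation by parts against
`∇W^{(λ+1)} = W^{(λ)} Ψ` gives
`⟨p, Q(x-1) Ψ^*⟩_{W^{(λ)}} = ⟨p, Q(x-1)⟩_{W^{(λ+1)}} - ⟨p(x+1), Q⟩_{W^{(λ+1)}}`,
and `W^{(λ+1)} = W^{(λ)} Φ` turns `⟨p, Q(x-1) - Q⟩_{W^{(λ+1)}}` back into a `W^{(λ)}`-pairing.
Each resulting pairing matches an orthogonal polynomial with a polynomial of at most its degree,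
so it is the squared norm times the adjoint of a single top coefficient; comparing them yields
`(n+1) H_n^{(λ+1)} = H_{n+1}^{(λ)} (G_{n+1}^{(λ)})^*`. The squared norms are positive definite
(`v^* P(x)` is a nonzero polynomial, so it cannot vanish on all of `ℕ`), which makes `G_{n+1}`
invertible, and iterating the relation in `λ` gives the product formula.
-/

section Taylor

variable {R : Type*} [Ring R]

theorem coeff_taylor_of_natDegree_le_succ (r : R) {p : R[X]} {n : ℕ} (hp : p.natDegree ≤ n + 1) :
    (taylor r p).coeff n = p.coeff n + (n + 1) • (p.coeff (n + 1) * r) := by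
  rw [taylor_apply, Polynomial.comp, eval₂_eq_sum_range' C (Nat.lt_succ_of_le hp), finsetSum_coeff,
    Finset.sum_range_succ, Finset.sum_range_succ, Finset.sum_eq_zero]
  · simp only [coeff_C_mul, coeff_X_add_C_pow, tsub_self, add_tsub_cancel_left, pow_zero, pow_one,
      Nat.choose_self, Nat.choose_succ_self_right, Nat.cast_one, mul_one, nsmul_eq_mul,
      zero_add]
    rw [Nat.cast_comm, mul_assoc]
  · intro k hk
    rw [coeff_C_mul, coeff_X_add_C_pow, Nat.choose_eq_zero_of_lt (Finset.mem_range.1 hk)]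
    simp

theorem coeff_taylor_sub (r : R) {p : R[X]} {n : ℕ} (hp : p.natDegree ≤ n + 1) :
    (taylor r p - p).coeff n = (n + 1) • (p.coeff (n + 1) * r) := by
  rw [coeff_sub, coeff_taylor_of_natDegree_le_succ r hp, add_sub_cancel_left]

theorem natDegree_taylor_sub_le (r : R) {p : R[X]} {n : ℕ} (hp : p.natDegree ≤ n + 1) :
    (taylor r p - p).natDegree ≤ n := by
  rw [natDegree_le_iff_coeff_eq_zero]
  intro k hk
  rw [coeff_taylor_sub r (by omega), coeff_eq_zero_of_natDegree_lt (by omega), zero_mul, smul_zero]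

end Taylor

section MatEval

variable {N : ℕ}

def matEvalRingHom (z : ℂ) : Polynomial (Mat N) →+* Mat N :=
  eval₂RingHom' (RingHom.id _) (z • 1) fun a => (Commute.one_right a).smul_right z

@[simp] theorem matEval_add (p q : Polynomial (Mat N)) (z : ℂ) :
    matEval (p + q) z = matEval p z + matEval q z := map_add (matEvalRingHom z) p q

@[simp] theorem matEval_sub (p q : Polynomial (Mat N)) (z : ℂ) :
    matEval (p - q) z = matEval p z - matEval q z := map_sub (matEvalRingHom z) p q

@[simp] theorem matEval_mul (p q : Polynomial (Mat N)) (z : ℂ) :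
    matEval (p * q) z = matEval p z * matEval q z := map_mul (matEvalRingHom z) p q

@[simp] theorem matEval_zero (z : ℂ) : matEval (0 : Polynomial (Mat N)) z = 0 := eval_zero

@[simp] theorem matEval_C (a : Mat N) (z : ℂ) : matEval (C a) z = a := eval_C

@[simp] theorem matEval_X (z : ℂ) : matEval (X : Polynomial (Mat N)) z = z • 1 := eval_X

@[simp] theorem matEval_pow (p : Polynomial (Mat N)) (k : ℕ) (z : ℂ) :
    matEval (p ^ k) z = matEval p z ^ k := map_pow (matEvalRingHom z) p k

theorem matEval_eq_sum_range (p : Polynomial (Mat N)) (z : ℂ) :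
    matEval p z = ∑ k ∈ Finset.range (p.natDegree + 1), z ^ k • p.coeff k := by
  simp_rw [matEval, eval_eq_sum_range, _root_.smul_pow, one_pow, mul_smul_one]

theorem matEval_taylor (c : ℂ) (p : Polynomial (Mat N)) (z : ℂ) :
    matEval (taylor (c • 1) p) z = matEval p (z + c) := by
  induction p using Polynomial.induction_on' with
  | add p q hp hq => rw [map_add, matEval_add, matEval_add, hp, hq]
  | monomial k a =>
    rw [taylor_monomial, ← C_mul_X_pow_eq_monomial]
    simp [add_smul]

end MatEval

section InnerProduct

variable {N : ℕ} {W : ℤ → Mat N}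

theorem IsWeight.summable_pow_smul (hW : IsWeight W) (k : ℕ) :
    Summable fun x : ℕ => (x : ℂ) ^ k • W x :=
  Pi.summable.2 fun i => Pi.summable.2 fun j => Summable.of_norm <| by
    simpa [norm_mul] using hW.moments k i j

theorem conjTranspose_matEval_natCast (p : Polynomial (Mat N)) (x : ℕ) :
    (matEval p x)ᴴ = ∑ k ∈ Finset.range (p.natDegree + 1), (x : ℂ) ^ k • (p.coeff k)ᴴ := by
  simp [matEval_eq_sum_range, conjTranspose_sum, conjTranspose_smul]

theorem IsWeight.summable_inner (hW : IsWeight W) (p q : Polynomial (Mat N)) :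
    Summable fun x : ℕ => matEval p x * W x * (matEval q x)ᴴ := by
  have expand : ∀ x : ℕ, matEval p x * W x * (matEval q x)ᴴ =
      ∑ k ∈ Finset.range (p.natDegree + 1), ∑ l ∈ Finset.range (q.natDegree + 1),
        p.coeff k * ((x : ℂ) ^ (k + l) • W x) * (q.coeff l)ᴴ := by
    intro x
    rw [conjTranspose_matEval_natCast, matEval_eq_sum_range]
    simp only [Finset.sum_mul, Finset.mul_sum, Finset.smul_sum, pow_add, mul_smul,
      smul_mul_assoc, mul_smul_comm]
    rw [Finset.sum_comm]
    exact Finset.sum_congr rfl fun k _ => Finset.sum_congr rfl fun l _ => smul_comm _ _ _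
  simp only [expand]
  exact summable_sum fun k _ => summable_sum fun l _ =>
    ((hW.summable_pow_smul (k + l)).mul_left _).mul_right _

@[simp] theorem innerW_zero_right (p : Polynomial (Mat N)) : innerW W p 0 = 0 := by
  simp [innerW]

theorem innerW_sub_right (hW : IsWeight W) (p q₁ q₂ : Polynomial (Mat N)) :
    innerW W p (q₁ - q₂) = innerW W p q₁ - innerW W p q₂ := by
  simp only [innerW, ← (hW.summable_inner p q₁).tsum_sub (hW.summable_inner p q₂), matEval_sub,
    conjTranspose_sub, mul_sub]

theorem innerW_C_mul_right (hW : IsWeight W) (p q : Polynomial (Mat N)) (a : Mat N) :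
    innerW W p (C a * q) = innerW W p q * aᴴ := by
  rw [innerW, innerW, ← (hW.summable_inner p q).tsum_mul_right]
  simp only [matEval_mul, matEval_C, conjTranspose_mul, mul_assoc]

theorem conjTranspose_innerW (hW : IsWeight W) (p q : Polynomial (Mat N)) :
    (innerW W p q)ᴴ = innerW W q p := by
  simp only [innerW, conjTranspose_tsum, conjTranspose_mul, conjTranspose_conjTranspose,
    (hW.posDef _).isHermitian.eq, mul_assoc]

theorem innerW_sub_left (hW : IsWeight W) (p₁ p₂ q : Polynomial (Mat N)) :
    innerW W (p₁ - p₂) q = innerW W p₁ q - innerW W p₂ q := by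
  rw [← conjTranspose_innerW hW, innerW_sub_right hW, conjTranspose_sub,
    conjTranspose_innerW hW, conjTranspose_innerW hW]

end InnerProduct

theorem degree_sub_C_mul_lt {R : Type*} [Ring R] {P r : R[X]} {n : ℕ} (hP : P.Monic)
    (hPn : P.natDegree = n) (hr : r.degree < ↑(n + 1)) : (r - C (r.coeff n) * P).degree < n := by
  rw [degree_lt_iff_coeff_zero] at hr ⊢
  intro m hm
  rw [coeff_sub, coeff_C_mul]
  rcases hm.eq_or_lt with rfl | hlt
  · rw [← hPn, hP.coeff_natDegree, mul_one, sub_self]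
  · rw [hr m hlt, coeff_eq_zero_of_natDegree_lt (p := P) (hPn ▸ hlt), mul_zero, sub_zero]

namespace IsMOS

variable {N : ℕ} {W : ℤ → Mat N} {P : ℕ → Polynomial (Mat N)}

theorem innerW_eq_zero_of_degree_lt (hW : IsWeight W) (hP : IsMOS W P) {n : ℕ}
    {s : Polynomial (Mat N)} (hs : s.degree < n) : innerW W (P n) s = 0 := by
  suffices ∀ k ≤ n, ∀ s : Polynomial (Mat N), s.degree < k → innerW W (P n) s = 0 from
    this n le_rfl s hs
  intro k
  induction k with
  | zero =>
    intro _ s hs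
    rw [Nat.cast_zero, Nat.WithBot.lt_zero_iff, degree_eq_bot] at hs
    rw [hs, innerW_zero_right]
  | succ k ih =>
    intro hk s hs
    have hlower := ih (by omega) _ (degree_sub_C_mul_lt (hP.monic k) (hP.deg k) hs)
    rw [innerW_sub_right hW, innerW_C_mul_right hW, hP.orth n k (by omega), zero_mul,
      sub_zero] at hlower
    exact hlower

theorem innerW_right_of_natDegree_le (hW : IsWeight W) (hP : IsMOS W P) {n : ℕ}
    {r : Polynomial (Mat N)} (hr : r.natDegree ≤ n) :
    innerW W (P n) r = innerW W (P n) (P n) * (r.coeff n)ᴴ := by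
  have hlower := hP.innerW_eq_zero_of_degree_lt hW (degree_sub_C_mul_lt (hP.monic n) (hP.deg n)
    (degree_le_natDegree.trans_lt (by exact_mod_cast Nat.lt_succ_of_le hr)))
  rwa [innerW_sub_right hW, innerW_C_mul_right hW, sub_eq_zero] at hlower

theorem innerW_left_of_natDegree_le (hW : IsWeight W) (hP : IsMOS W P) {n : ℕ}
    {r : Polynomial (Mat N)} (hr : r.natDegree ≤ n) :
    innerW W r (P n) = r.coeff n * innerW W (P n) (P n) := by
  rw [← conjTranspose_innerW hW, hP.innerW_right_of_natDegree_le hW hr, conjTranspose_mul,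
    conjTranspose_conjTranspose, conjTranspose_innerW hW]

end IsMOS

theorem HasSum.dotProduct_mulVec {ι n R : Type*} [Fintype n] [CommSemiring R] [TopologicalSpace R]
    [IsTopologicalSemiring R] {f : ι → Matrix n n R} {a : Matrix n n R} (hf : HasSum f a)
    (u w : n → R) : HasSum (fun x => u ⬝ᵥ (f x *ᵥ w)) (u ⬝ᵥ (a *ᵥ w)) :=
  let L : Matrix n n R →+ R :=
    { toFun := fun M => u ⬝ᵥ (M *ᵥ w)
      map_zero' := by simp
      map_add' := fun M M' => by simp [add_mulVec, dotProduct_add] }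
  hf.map L (continuous_const.dotProduct (continuous_id.matrix_mulVec continuous_const))

theorem exists_vecMul_matEval_ne_zero {N : ℕ} {p : Polynomial (Mat N)} (hp : p.Monic)
    {v : Fin N → ℂ} (hv : v ≠ 0) : ∃ x : ℕ, v ᵥ* matEval p x ≠ 0 := by
  obtain ⟨j, hj⟩ := Function.ne_iff.1 hv
  -- the `j`-th entry of `v ᵥ* p(x)` is a scalar polynomial in `x` with leading coefficient `v j`
  let f : ℂ[X] := ∑ k ∈ Finset.range (p.natDegree + 1), C ((v ᵥ* p.coeff k) j) * X ^ k
  have hf_eval : ∀ x : ℕ, f.eval (x : ℂ) = (v ᵥ* matEval p x) j := by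
    intro x
    simp only [f, eval_finsetSum, eval_mul, eval_C, eval_pow, eval_X, matEval_eq_sum_range,
      vecMul_sum, vecMul_smul, Finset.sum_apply, Pi.smul_apply, smul_eq_mul]
    exact Finset.sum_congr rfl fun k _ => mul_comm _ _
  have hf_coeff : f.coeff p.natDegree = v j := by
    simp [f, finsetSum_coeff, hp.coeff_natDegree]
  by_contra! h
  have hf : f = 0 := eq_zero_of_infinite_isRoot f <|
    (Set.infinite_range_of_injective Nat.cast_injective).mono <| by
      rintro _ ⟨x, rfl⟩
      simp [IsRoot, hf_eval, h]
  exact hj (by simpa [hf] using hf_coeff.symm)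

theorem IsMOS.posDef_innerW_self {N : ℕ} {W : ℤ → Mat N} {P : ℕ → Polynomial (Mat N)}
    (hW : IsWeight W) (hP : IsMOS W P) (n : ℕ) : (innerW W (P n) (P n)).PosDef := by
  refine .of_dotProduct_mulVec_pos (conjTranspose_innerW hW _ _) fun v hv => ?_
  let u : ℕ → Fin N → ℂ := fun x => (matEval (P n) x)ᴴ *ᵥ v
  have hterm : ∀ x : ℕ, star v ⬝ᵥ ((matEval (P n) x * W x * (matEval (P n) x)ᴴ) *ᵥ v)
      = star (u x) ⬝ᵥ (W x *ᵥ u x) := by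
    intro x
    rw [← mulVec_mulVec, ← mulVec_mulVec, dotProduct_mulVec, star_mulVec,
      conjTranspose_conjTranspose]
  obtain ⟨x₀, hx₀⟩ := exists_vecMul_matEval_ne_zero (hP.monic n) (star_ne_zero.2 hv)
  have hu : u x₀ ≠ 0 := by
    rwa [Ne, ← star_eq_zero, star_mulVec, conjTranspose_conjTranspose]
  have hsum := ((hW.summable_inner (P n) (P n)).hasSum.dotProduct_mulVec (star v) v)
  simp only [hterm] at hsum
  rw [innerW, ← hsum.tsum_eq]
  exact hsum.summable.tsum_pos (fun x => (hW.posDef x).posSemidef.dotProduct_mulVec_nonneg _) x₀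
    ((hW.posDef x₀).dotProduct_mulVec_pos hu)

section Pearson

variable {N : ℕ} {W W' : ℤ → Mat N} {P P' : ℕ → Polynomial (Mat N)} {Φ Ψ : Polynomial (Mat N)}

theorem innerW_eq_innerW_mul (hΦ : ∀ x : ℕ, W' x = W x * (matEval Φ x)ᴴ)
    (p q : Polynomial (Mat N)) : innerW W' p q = innerW W p (q * Φ) := by
  simp only [innerW, hΦ, matEval_mul, conjTranspose_mul, mul_assoc]

/-- Summation by parts; the boundary term vanishes because `W' (-1) = 0`. -/
theorem innerW_taylor_neg_one_mul_of_nabla (hW' : IsWeight W')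
    (hΨ : ∀ x : ℕ, nabla W' x = W x * (matEval Ψ x)ᴴ) (p q : Polynomial (Mat N)) :
    innerW W p (taylor (-1) q * Ψ) = innerW W' p (taylor (-1) q) - innerW W' (taylor 1 p) q := by
  have shift_neg : ∀ (r : Polynomial (Mat N)) z, matEval (taylor (-1) r) z = matEval r (z - 1) := by
    simpa [sub_eq_add_neg] using matEval_taylor (-1)
  have shift_pos : ∀ (r : Polynomial (Mat N)) z, matEval (taylor 1 r) z = matEval r (z + 1) := by
    simpa using matEval_taylor 1
  let g : ℕ → Mat N := fun x => matEval p x * W' ((x : ℤ) - 1) * (matEval (taylor (-1) q) x)ᴴ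
  have hg_zero : g 0 = 0 := by simp [g, hW'.neg (-1) (by norm_num)]
  have hg_succ : ∀ x : ℕ, g (x + 1) = matEval (taylor 1 p) x * W' x * (matEval q x)ᴴ := by
    simp [g, shift_neg, shift_pos]
  have hg : Summable g :=
    (summable_nat_add_iff 1).1 (by simpa only [hg_succ] using hW'.summable_inner _ _)
  have hterm : ∀ x : ℕ, matEval p x * W x * (matEval (taylor (-1) q * Ψ) x)ᴴ
      = matEval p x * W' x * (matEval (taylor (-1) q) x)ᴴ - g x := by
    intro x
    rw [matEval_mul, conjTranspose_mul, ← mul_assoc, mul_assoc _ (W x), ← hΨ, nabla, mul_sub,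
      sub_mul]
  rw [innerW, innerW, innerW, tsum_congr hterm, (hW'.summable_inner _ _).tsum_sub hg,
    hg.tsum_eq_zero_add, hg_zero, zero_add, tsum_congr hg_succ]

theorem innerW_taylor_neg_one_sub (hW : IsWeight W) (hP : IsMOS W P)
    (hΦ : ∀ x : ℕ, W' x = W x * (matEval Φ x)ᴴ) (hΦ_deg : Φ.natDegree ≤ 2)
    {Q : Polynomial (Mat N)} (hQ : Q.Monic) {n : ℕ} (hQ_deg : Q.natDegree = n) :
    innerW W' (P (n + 1)) (taylor (-1) Q - Q)
      = -((n : ℂ) • (innerW W (P (n + 1)) (P (n + 1)) * (Φ.coeff 2)ᴴ)) := by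
  rcases n with _ | m
  · rw [eq_C_of_natDegree_eq_zero hQ_deg, taylor_C, sub_self, innerW_zero_right]
    simp
  · have hdiff := natDegree_taylor_sub_le (-1) hQ_deg.le
    have hQ_lead : Q.coeff (m + 1) = 1 := hQ_deg ▸ hQ.coeff_natDegree
    rw [innerW_eq_innerW_mul hΦ,
      hP.innerW_right_of_natDegree_le hW (natDegree_mul_le_of_le hdiff hΦ_deg),
      coeff_mul_add_eq_of_natDegree_le hdiff hΦ_deg, coeff_taylor_sub (-1) hQ_deg.le,
      hQ_lead, one_mul, smul_mul_assoc, neg_one_mul, conjTranspose_nsmul, conjTranspose_neg,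
      smul_neg, mul_neg, mul_smul_comm, Nat.cast_smul_eq_nsmul]

/-- `Φ` and `Ψ` carry the adjoints of the coefficients of the paper's `Φ^{(λ)}, Ψ^{(λ)}`, so that
`-n • Φ.coeff 2 - Ψ.coeff 1` is `G_{n+1}^{(λ)}`. -/
theorem smul_innerW_self_eq_of_pearson (hW : IsWeight W) (hW' : IsWeight W') (hP : IsMOS W P)
    (hP' : IsMOS W' P') (hΦ : ∀ x : ℕ, W' x = W x * (matEval Φ x)ᴴ) (hΦ_deg : Φ.natDegree ≤ 2)
    (hΨ : ∀ x : ℕ, nabla W' x = W x * (matEval Ψ x)ᴴ) (hΨ_deg : Ψ.natDegree ≤ 1)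
    (n : ℕ) :
    ((n : ℂ) + 1) • innerW W' (P' n) (P' n)
      = innerW W (P (n + 1)) (P (n + 1)) * (-((n : ℂ) • Φ.coeff 2) - Ψ.coeff 1)ᴴ := by
  set p := P (n + 1)
  set Q := P' n
  have hQ_deg : Q.natDegree = n := hP'.deg n
  have hp_deg : p.natDegree = n + 1 := hP.deg (n + 1)
  have hp_lead : p.coeff (n + 1) = 1 := hp_deg ▸ (hP.monic (n + 1)).coeff_natDegree
  have hshiftQ_deg : (taylor (-1) Q).natDegree = n := (natDegree_taylor _ _).trans hQ_deg
  have hshiftQ_lead : (taylor (-1) Q).coeff n = 1 := by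
    rw [← hQ_deg, coeff_taylor_natDegree, (hP'.monic n).leadingCoeff]
  have hΨ_term : innerW W p (taylor (-1) Q * Ψ) = innerW W p p * (Ψ.coeff 1)ᴴ := by
    rw [hP.innerW_right_of_natDegree_le hW (natDegree_mul_le_of_le hshiftQ_deg.le hΨ_deg),
      coeff_mul_add_eq_of_natDegree_le hshiftQ_deg.le hΨ_deg, hshiftQ_lead, one_mul]
  have hΦ_term := innerW_taylor_neg_one_sub hW hP hΦ hΦ_deg (hP'.monic n) hQ_deg
  have hdiff_term : innerW W' (taylor 1 p - p) Q = ((n : ℂ) + 1) • innerW W' Q Q := by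
    rw [hP'.innerW_left_of_natDegree_le hW' (natDegree_taylor_sub_le 1 hp_deg.le),
      coeff_taylor_sub 1 hp_deg.le, hp_lead, mul_one, smul_mul_assoc, one_mul,
      ← Nat.cast_smul_eq_nsmul ℂ, Nat.cast_succ]
  have hparts := innerW_taylor_neg_one_mul_of_nabla hW' hΨ p Q
  rw [← hdiff_term, innerW_sub_left hW', conjTranspose_sub, conjTranspose_neg, conjTranspose_smul,
    Complex.star_def, Complex.conj_natCast, mul_sub, mul_neg, mul_smul_comm, ← hΨ_term, hparts,
    ← hΦ_term, innerW_sub_right hW']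
  abel

end Pearson

theorem mul_prod_eq_factorial_smul {N : ℕ} {H G : ℕ → ℕ → Mat N}
    (hrel : ∀ n lam : ℕ, ((n : ℂ) + 1) • H (lam + 1) n = H lam (n + 1) * (G (n + 1) lam)ᴴ)
    (n lam : ℕ) :
    H lam n * ((List.range n).map fun i => (G (n - i) (lam + i))ᴴ).prod
      = (n.factorial : ℂ) • H (lam + n) 0 := by
  induction n generalizing lam with
  | zero => simp
  | succ n ih =>
    have htail : (fun i => (G (n + 1 - i) (lam + i))ᴴ) ∘ Nat.succ
        = fun i => (G (n - i) (lam + 1 + i))ᴴ := by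
      funext i
      simp [Nat.succ_sub_succ, Nat.add_right_comm lam 1 i, add_assoc]
    rw [List.range_succ_eq_map, List.map_cons, List.prod_cons, List.map_map, htail, ← mul_assoc,
      Nat.sub_zero, add_zero, ← hrel, smul_mul_assoc, ih, smul_smul, Nat.factorial_succ,
      add_right_comm lam 1 n, add_assoc, Nat.cast_mul, Nat.cast_succ, mul_comm]

/-- relations between squared norms of the shifted families, invertibility
of the matrices `G_n^{(λ)}`, and the resulting formula for the norms. -/
theorem squared_norms_relation {N : ℕ} (W : ℕ → ℤ → Mat N)
    (hW : ∀ lam, IsWeight (W lam))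
    (K2 K1 K0 J1 J0 : ℕ → Mat N)
    (h1 : ∀ lam : ℕ, ∀ x : ℤ,
      W (lam + 1) x = W lam x * ((x : ℂ) ^ 2 • K2 lam + (x : ℂ) • K1 lam + K0 lam))
    (h2 : ∀ lam : ℕ, ∀ x : ℤ,
      W (lam + 1) x - W (lam + 1) (x - 1) = W lam x * ((x : ℂ) • J1 lam + J0 lam))
    (P : ℕ → ℕ → Polynomial (Mat N)) (hP : ∀ lam, IsMOS (W lam) (P lam))
    (H : ℕ → ℕ → Mat N)
    (hH : ∀ lam n, H lam n = innerW (W lam) (P lam n) (P lam n))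
    (G : ℕ → ℕ → Mat N)
    (hG : ∀ n lam, G n lam = -(((n : ℂ) - 1) • (K2 lam)ᴴ) - (J1 lam)ᴴ) :
    (∀ n lam : ℕ, ((n : ℂ) + 1) • H (lam + 1) n = H lam (n + 1) * (G (n + 1) lam)ᴴ) ∧
    (∀ n lam : ℕ, 1 ≤ n → IsUnit (G n lam)) ∧
    (∀ n lam : ℕ,
      H lam n * ((List.range n).map fun i => (G (n - i) (lam + i))ᴴ).prod
        = (n.factorial : ℂ) • H (lam + n) 0) := by
  have hH_posDef : ∀ lam n, (H lam n).PosDef := fun lam n =>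
    hH lam n ▸ (hP lam).posDef_innerW_self (hW lam) n
  have relation :
      ∀ n lam : ℕ, ((n : ℂ) + 1) • H (lam + 1) n = H lam (n + 1) * (G (n + 1) lam)ᴴ := by
    intro n lam
    have hΦ : ∀ x : ℕ, W (lam + 1) x
        = W lam x * (matEval (C (K2 lam)ᴴ * X ^ 2 + C (K1 lam)ᴴ * X + C (K0 lam)ᴴ) x)ᴴ := by
      intro x
      simpa [_root_.smul_pow] using h1 lam x
    have hΨ : ∀ x : ℕ, nabla (W (lam + 1)) x
        = W lam x * (matEval (C (J1 lam)ᴴ * X + C (J0 lam)ᴴ) x)ᴴ := by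
      intro x
      simpa [nabla] using h2 lam x
    rw [hH, hH, hG, smul_innerW_self_eq_of_pearson (hW lam) (hW (lam + 1)) (hP lam) (hP (lam + 1))
      hΦ natDegree_quadratic_le hΨ natDegree_linear_le n]
    simp
  refine ⟨relation, fun n lam hn => ?_, mul_prod_eq_factorial_smul relation⟩
  obtain ⟨m, rfl⟩ := Nat.exists_eq_add_of_le' hn
  have hunit : IsUnit (H lam (m + 1) * (G (m + 1) lam)ᴴ) :=
    relation m lam ▸ ((hH_posDef (lam + 1) m).smul (by positivity : (0 : ℂ) < m + 1)).isUnit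
  rw [← isUnit_conjTranspose]
  exact ((hH_posDef lam (m + 1)).isUnit.unit.isUnit_units_mul _).1 hunit
end
end

section
/- Let ρ : ℕ₀ → M_N(ℂ) satisfy the block Vandermonde condition and let 𝒴, 𝒵 : ℕ₀ → M_N(ℂ). Suppose (Q_x)_{x≥0} and (Q̃_x)_{x≥0} are two sequences of monic matrix polynomials with deg Q_x = deg Q̃_x = x (and with the conventions Q_{−1} = Q̃_{−1} = 0 and Q_0 = Q̃_0 = I) such that for all x, n ∈ ℕ₀, ρ(n)·Q_x⟦ρ(n)⟧ = Q_{x+1}⟦ρ(n)⟧ + Q_x⟦ρ(n)⟧·𝒴_x + Q_{x−1}⟦ρ(n)⟧·𝒵_x, and the same recurrence holds with Q replaced by Q̃. Then Q_x = Q̃_x (equality of all coefficients) for every x ∈ ℕ₀. -/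
open scoped BigOperators ComplexOrder
open Matrix Polynomial Filter

noncomputable section

lemma leftEval_eq_sum_range {N n : ℕ} {P : Polynomial (Mat N)} (h : P.natDegree < n)
    (M : Mat N) : leftEval P M = ∑ j ∈ Finset.range n, M ^ j * P.coeff j :=
  Polynomial.sum_over_range' P (fun _ => mul_zero _) n h

lemma leftEval_sub {N : ℕ} (P Q : Polynomial (Mat N)) (M : Mat N) :
    leftEval (P - Q) M = leftEval P M - leftEval Q M := by
  set n := max P.natDegree Q.natDegree + 1 with hn
  have h1 : P.natDegree < n := Nat.lt_succ_of_le (le_max_left _ _)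
  have h2 : Q.natDegree < n := Nat.lt_succ_of_le (le_max_right _ _)
  have h3 : (P - Q).natDegree < n :=
    Nat.lt_succ_of_le (Polynomial.natDegree_sub_le P Q)
  rw [leftEval_eq_sum_range h1, leftEval_eq_sum_range h2, leftEval_eq_sum_range h3,
    ← Finset.sum_sub_distrib]
  exact Finset.sum_congr rfl fun j _ => by rw [Polynomial.coeff_sub, mul_sub]

lemma key_vanish {N x : ℕ} {ρ : ℕ → Mat N}
    (k : Fin (x + 1) → ℕ)
    (hV : IsUnit (Matrix.of fun p q : Fin (x + 1) × Fin N => (ρ (k p.1) ^ (q.1 : ℕ)) p.2 q.2))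
    (D : Polynomial (Mat N)) (hd : D.natDegree ≤ x)
    (h0 : ∀ n, leftEval D (ρ n) = 0) : D = 0 := by
  set V : Matrix (Fin (x+1) × Fin N) (Fin (x+1) × Fin N) ℂ :=
    Matrix.of fun p q : Fin (x + 1) × Fin N => (ρ (k p.1) ^ (q.1 : ℕ)) p.2 q.2 with hVdef
  set C : Matrix (Fin (x+1) × Fin N) (Fin N) ℂ := fun p t => D.coeff p.1 p.2 t with hCdef
  have hmul : V * C = 0 := by
    ext ⟨i, r⟩ t
    rw [Matrix.mul_apply]
    have : ∑ j : Fin (x+1) × Fin N, V (i, r) j * C j t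
        = (leftEval D (ρ (k i))) r t := by
      rw [leftEval_eq_sum_range (Nat.lt_succ_of_le hd), Matrix.sum_apply,
        ← Fin.sum_univ_eq_sum_range (f := fun j => ((ρ (k i)) ^ j * D.coeff j) r t),
        Fintype.sum_prod_type]
      refine Finset.sum_congr rfl fun j _ => ?_
      rw [Matrix.mul_apply]
      rfl
    rw [this, h0 (k i)]
    rfl
  obtain ⟨u, hu⟩ := hV
  have hC : C = 0 := by
    have h1 : (↑u⁻¹ : Matrix (Fin (x+1) × Fin N) (Fin (x+1) × Fin N) ℂ) * (V * C)
        = (0 : Matrix (Fin (x+1) × Fin N) (Fin N) ℂ) := by rw [hmul, Matrix.mul_zero]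
    rwa [← Matrix.mul_assoc, ← hu, u.inv_mul,
      Matrix.one_mul] at h1
  ext j s t
  simp only [Polynomial.coeff_zero, Matrix.zero_apply]
  rcases le_or_gt j x with hj | hj
  · have h := congrFun (congrFun hC (⟨j, Nat.lt_succ_of_le hj⟩, s)) t
    simpa [hCdef] using h
  · rw [Polynomial.coeff_eq_zero_of_natDegree_lt (lt_of_le_of_lt hd hj)]
    rfl

/-- uniqueness of monic sequences satisfying the dual three term
recurrence relation, under the block Vandermonde condition on `ρ`. -/
theorem dual_recurrence_unique {N : ℕ} (ρ : ℕ → Mat N) (hρ : BlockVdm ρ)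
    (Y Z : ℕ → Mat N) (Q Qt : ℕ → Polynomial (Mat N))
    (hQm : ∀ x, (Q x).Monic) (hQd : ∀ x, (Q x).natDegree = x)
    (hQtm : ∀ x, (Qt x).Monic) (hQtd : ∀ x, (Qt x).natDegree = x)
    (hQ0 : Q 0 = 1) (hQt0 : Qt 0 = 1)
    (hrec : ∀ x n : ℕ, ρ n * leftEval (Q x) (ρ n)
      = leftEval (Q (x + 1)) (ρ n) + leftEval (Q x) (ρ n) * Y x
          + (if x = 0 then 0 else leftEval (Q (x - 1)) (ρ n) * Z x))
    (hrect : ∀ x n : ℕ, ρ n * leftEval (Qt x) (ρ n)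
      = leftEval (Qt (x + 1)) (ρ n) + leftEval (Qt x) (ρ n) * Y x
          + (if x = 0 then 0 else leftEval (Qt (x - 1)) (ρ n) * Z x)) :
    ∀ x, Q x = Qt x := by
  intro x
  induction x using Nat.strong_induction_on with
  | _ x ih =>
    cases x with
    | zero => rw [hQ0, hQt0]
    | succ m =>
      have hqm : Q m = Qt m := ih m (Nat.lt_succ_self m)
      have heq : ∀ n, leftEval (Q (m + 1)) (ρ n) = leftEval (Qt (m + 1)) (ρ n) := by
        intro n
        have h1 := hrec m n
        have h2 := hrect m n
        rw [hqm] at h1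
        have hz : (if m = 0 then 0 else leftEval (Q (m - 1)) (ρ n) * Z m)
            = (if m = 0 then 0 else leftEval (Qt (m - 1)) (ρ n) * Z m) := by
          split_ifs with hm
          · rfl
          · rw [ih (m - 1) (by omega)]
        rw [hz] at h1
        have h3 := h1.symm.trans h2
        exact add_right_cancel (add_right_cancel h3)
      obtain ⟨k, hV⟩ := hρ m
      have hd : (Q (m + 1) - Qt (m + 1)).natDegree ≤ m := by
        rw [Polynomial.natDegree_le_iff_coeff_eq_zero]
        intro j hj
        rw [Polynomial.coeff_sub]
        rcases eq_or_lt_of_le (Nat.succ_le_of_lt hj) with hj' | hj'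
        · rw [← hj']
          have e1 : (Q (m + 1)).coeff (m + 1) = 1 := by
            have := (hQm (m + 1)).coeff_natDegree
            rwa [hQd (m + 1)] at this
          have e2 : (Qt (m + 1)).coeff (m + 1) = 1 := by
            have := (hQtm (m + 1)).coeff_natDegree
            rwa [hQtd (m + 1)] at this
          rw [e1, e2, sub_self]
        · rw [Polynomial.coeff_eq_zero_of_natDegree_lt (by rw [hQd]; exact hj'),
            Polynomial.coeff_eq_zero_of_natDegree_lt (by rw [hQtd]; exact hj'), sub_self]
      have hD := key_vanish k hV _ hd
        (fun n => by rw [leftEval_sub, heq n, sub_self])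
      exact sub_eq_zero.mp hD
end
end

section
/- Let a ∈ ℂ with a ≠ 0. For every n ∈ ℕ₀ and every x ∈ ℂ, the Charlier polynomials satisfy the convolution identity ∑_{m=0}^n (−1)^m·(c_{n−m}^{(a)}(x)/(n−m)!)·(c_m^{(−a)}(−x)/m!) = δ_{n,0}; that is, the sum equals 1 when n = 0 and equals 0 for every n ≥ 1. -/
/-!
Since `(-n)_k / n! = (-1)^k / (n-k)!` and `(-1)^k (-x)_k / k! = binom(x, k)`, we get
`c_n^{(a)}(x) / n! = ∑_k binom(x, k) (-1/a)^k / (n-k)!`, i.e. `∑_n c_n^{(a)}(x) tⁿ / n!` is the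
formal power series `e^t (1 - t/a)^x`, where `(1 - t/a)^x` is the binomial series `(1 + t)^x`
rescaled by `-1/a`. Replacing `(t, a, x)` by `(-t, -a, -x)` shows that
`(-1)^m c_m^{(-a)}(-x) / m!` are the coefficients of `e^{-t} (1 - t/a)^{-x}`, and the sum in the
theorem is the `n`-th coefficient of the product of these two series, which is `1`.
-/

open scoped BigOperators
open Polynomial

noncomputable section

/-- The scalar Charlier polynomial
`c_n^{(a)}(x) = ∑_{k=0}^n ((-n)_k (-x)_k / k!) (-1/a)^k`. -/
def charlier (a : ℂ) (n : ℕ) (x : ℂ) : ℂ :=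
  ∑ k ∈ Finset.range (n + 1),
    (ascPochhammer ℂ k).eval (-(n : ℂ)) * (ascPochhammer ℂ k).eval (-x)
      / (k.factorial : ℂ) * (-(1 / a)) ^ k

open PowerSeries Finset

theorem Ring.choose_eq_neg_one_pow_mul_ascPochhammer_eval_neg_div {K : Type*} [Field K]
    [CharZero K] (x : K) (k : ℕ) :
    Ring.choose x k = (-1) ^ k * (ascPochhammer K k).eval (-x) / k.factorial := by
  have h := Ring.choose_neg' (-x) k
  rw [neg_neg] at h
  rw [h, eq_div_iff (by exact_mod_cast k.factorial_ne_zero), ← ascPochhammer_smeval_eq_eval,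
    ← Ring.factorial_nsmul_multichoose_eq_ascPochhammer]
  simp only [Units.smul_def, Int.coe_negOnePow_natCast, zsmul_eq_mul, nsmul_eq_mul]
  push_cast
  ring

theorem ascPochhammer_eval_neg_natCast {K : Type*} [Field K] [CharZero K] {n k : ℕ}
    (hk : k ≤ n) :
    (ascPochhammer K k).eval (-(n : K)) = (-1) ^ k * n.factorial / (n - k).factorial := by
  rw [ascPochhammer_eval_neg_eq_descPochhammer, descPochhammer_eval_eq_descFactorial,
    ← Nat.factorial_mul_descFactorial hk, Nat.cast_mul, mul_div_assoc, mul_div_cancel_left₀]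
  exact_mod_cast Nat.factorial_ne_zero _

theorem charlier_div_factorial (a x : ℂ) (n : ℕ) :
    charlier a n x / n.factorial =
      ∑ k ∈ range (n + 1), Ring.choose x k * (-a⁻¹) ^ k / (n - k).factorial := by
  rw [charlier, sum_div]
  refine sum_congr rfl fun k hk => ?_
  have hkn : k ≤ n := Nat.lt_succ_iff.mp (mem_range.mp hk)
  have hn : (n.factorial : ℂ) ≠ 0 := Nat.cast_ne_zero.mpr n.factorial_ne_zero
  rw [Ring.choose_eq_neg_one_pow_mul_ascPochhammer_eval_neg_div,
    ascPochhammer_eval_neg_natCast hkn, one_div]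
  field_simp

def charlierEGF (a x : ℂ) : ℂ⟦X⟧ :=
  rescale (-a⁻¹) (binomialSeries ℂ x) * exp ℂ

theorem coeff_charlierEGF (a x : ℂ) (n : ℕ) :
    coeff n (charlierEGF a x) = charlier a n x / n.factorial := by
  rw [charlierEGF, PowerSeries.coeff_mul, charlier_div_factorial,
    Nat.sum_antidiagonal_eq_sum_range_succ_mk]
  refine sum_congr rfl fun k _ => ?_
  rw [coeff_rescale, binomialSeries_coeff, coeff_exp, smul_eq_mul, mul_one, map_div₀, map_one,
    map_natCast]
  ring

theorem charlierEGF_mul_rescale_neg_one (a x : ℂ) :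
    charlierEGF a x * rescale (-1) (charlierEGF (-a) (-x)) = 1 := by
  rw [charlierEGF, charlierEGF, map_mul, rescale_rescale, inv_neg, neg_neg, mul_neg_one,
    mul_mul_mul_comm, ← map_mul, ← binomialSeries_add, add_neg_cancel, binomialSeries_zero,
    map_one, one_mul]
  exact exp_mul_exp_neg_eq_one

theorem charlier_convolution_general (a : ℂ) (n : ℕ) (x : ℂ) :
    ∑ m ∈ Finset.range (n + 1),
      (-1 : ℂ) ^ m * (charlier a (n - m) x / ((n - m).factorial : ℂ))
        * (charlier (-a) m (-x) / (m.factorial : ℂ))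
      = if n = 0 then 1 else 0 := by
  calc _ = coeff n (rescale (-1) (charlierEGF (-a) (-x)) * charlierEGF a x) := by
        rw [PowerSeries.coeff_mul, Nat.sum_antidiagonal_eq_sum_range_succ_mk]
        refine sum_congr rfl fun m _ => ?_
        rw [coeff_rescale, coeff_charlierEGF, coeff_charlierEGF]
        ring
    _ = if n = 0 then 1 else 0 := by
        rw [mul_comm, charlierEGF_mul_rescale_neg_one, PowerSeries.coeff_one]

/-- the convolution identity for Charlier polynomials:
`∑_{m=0}^n (-1)^m (c_{n-m}^{(a)}(x)/(n-m)!)(c_m^{(-a)}(-x)/m!) = δ_{n,0}`. -/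
theorem charlier_convolution (a : ℂ) (ha : a ≠ 0) (n : ℕ) (x : ℂ) :
    ∑ m ∈ Finset.range (n + 1),
      (-1 : ℂ) ^ m * (charlier a (n - m) x / ((n - m).factorial : ℂ))
        * (charlier (-a) m (-x) / (m.factorial : ℂ))
      = if n = 0 then 1 else 0 :=
  charlier_convolution_general a n x
end
end

section
/- In the matrix Charlier setting with general parameters, let J = diag(1,2,…,N) and 𝔍^{(λ)}(x) = J + (x+λ)(I+A)^{−1}. Then for every λ ∈ ℕ₀ and every x ∈ ℕ₀, 𝔍^{(λ)}(x)·W^{(λ)}(x) = W^{(λ)}(x)·𝔍^{(λ)}(x)^*; equivalently, (J + (x+λ)(I+A)^{−1})·(I+A)^{x+λ}T^{(λ)}(I+A^*)^{x+λ} = (I+A)^{x+λ}T^{(λ)}(I+A^*)^{x+λ}·(J + (x+λ)(I+A^*)^{−1}). -/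
open scoped BigOperators ComplexOrder
open Matrix Polynomial

noncomputable section

/-- The nilpotent matrix `A` with `A_{j+1,j} = μ_{j+1}/μ_j` (paper indices `1,…,N`). -/
def Amat (N : ℕ) (μ : ℕ → ℝ) : Mat N :=
  Matrix.of fun j k : Fin N =>
    if (j : ℕ) = (k : ℕ) + 1 then ((μ ((j : ℕ) + 1) / μ ((k : ℕ) + 1) : ℝ) : ℂ) else 0

/-- The diagonal matrix `T = diag(δ_1,…,δ_N)`. -/
def Tmat (N : ℕ) (δ : ℕ → ℝ) : Mat N :=
  Matrix.diagonal fun k : Fin N => ((δ ((k : ℕ) + 1) : ℝ) : ℂ)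

/-- The matrix Charlier weight
`W^{(λ)}(x) = (a^x/x!) (I+A)^{x+λ} T^{(λ)} (I+A^*)^{x+λ}`. -/
def Wch (N : ℕ) (a : ℝ) (μ δ : ℕ → ℝ) (lam x : ℕ) : Mat N :=
  ((a ^ x / x.factorial : ℝ) : ℂ) •
    ((1 + Amat N μ) ^ (x + lam) * Tmat N δ * (1 + (Amat N μ)ᴴ) ^ (x + lam))

/-- The unipotent lower triangular matrix `L(x)` with entries
`L(x)_{j,k} = (μ_j/μ_k)(-a)^{j-k} c_{j-k}^{(a)}(x)/(j-k)!` for `j ≥ k`. -/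
def Lmat (N : ℕ) (a : ℝ) (μ : ℕ → ℝ) (z : ℂ) : Mat N :=
  Matrix.of fun j k : Fin N =>
    if (k : ℕ) ≤ (j : ℕ) then
      ((μ ((j : ℕ) + 1) / μ ((k : ℕ) + 1) : ℝ) : ℂ) * (-(a : ℂ)) ^ ((j : ℕ) - (k : ℕ))
        * charlier (a : ℂ) ((j : ℕ) - (k : ℕ)) z / ((((j : ℕ) - (k : ℕ)).factorial) : ℂ)
    else 0

/-- Matrix-valued inner product for a weight supported on `ℕ₀`. -/
def innerN {N : ℕ} (W : ℕ → Mat N) (P Q : Polynomial (Mat N)) : Mat N :=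
  ∑' x : ℕ, matEval P x * W x * (matEval Q x)ᴴ

/-- `P` is the monic orthogonal sequence of the weight `W` supported on `ℕ₀`. -/
structure IsMOSN {N : ℕ} (W : ℕ → Mat N) (P : ℕ → Polynomial (Mat N)) : Prop where
  monic : ∀ n, (P n).Monic
  deg : ∀ n, (P n).natDegree = n
  orth : ∀ m n, m ≠ n → innerN W (P m) (P n) = 0

/-- The diagonal matrix `J = diag(1,2,…,N)`. -/
def Jdiag (N : ℕ) : Mat N := Matrix.diagonal fun j : Fin N => ((j : ℕ) + 1 : ℂ)

section AuxLemmas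

variable (N : ℕ) (μ δ : ℕ → ℝ)

lemma JA_comm : Jdiag N * Amat N μ = Amat N μ * Jdiag N + Amat N μ := by
  ext j k
  simp only [Jdiag, Amat, Matrix.diagonal_mul, Matrix.mul_diagonal, Matrix.add_apply, Matrix.of_apply]
  split
  · rename_i h
    have : ((j : ℕ) : ℂ) = (k : ℕ) + 1 := by exact_mod_cast congrArg Nat.cast h
    rw [this]; ring
  · simp

lemma detB : (1 + Amat N μ).det = 1 := by
  rw [Matrix.det_of_lowerTriangular _ ?_]
  · simp [Amat, Matrix.one_apply, fun j k : Fin N => (Nat.succ_ne_self k).symm]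
  · intro i j hij
    have h2 : (i : ℕ) < (j : ℕ) := Fin.lt_iff_val_lt_val.mp hij
    simp only [Matrix.add_apply, Matrix.one_apply, Amat, Matrix.of_apply]
    rw [if_neg (by omega), if_neg (by omega)]
    simp

lemma Binv_mul : (1 + Amat N μ)⁻¹ * (1 + Amat N μ) = 1 :=
  Matrix.nonsing_inv_mul _ (by simp [detB])

lemma AB_comm : Amat N μ * (1 + Amat N μ) = (1 + Amat N μ) * Amat N μ := by
  noncomm_ring

lemma JB : Jdiag N * (1 + Amat N μ) = (1 + Amat N μ) * Jdiag N + Amat N μ := by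
  rw [mul_add, mul_one, JA_comm, add_mul, one_mul]; abel

lemma L0 : ∀ n : ℕ, Jdiag N * (1 + Amat N μ) ^ (n+1)
    = (1 + Amat N μ) ^ (n+1) * Jdiag N + ((n+1 : ℕ) : ℂ) • (Amat N μ * (1 + Amat N μ) ^ n) := by
  intro n
  induction n with
  | zero =>
    simpa using JB N μ
  | succ m ih =>
    rw [pow_succ' _ (m+1), ← mul_assoc, JB, add_mul, mul_assoc, ih, mul_add]
    have hAB : (1 + Amat N μ) * (Amat N μ * (1 + Amat N μ) ^ m)
        = Amat N μ * (1 + Amat N μ) ^ (m+1) := by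
      rw [← mul_assoc, ← AB_comm, mul_assoc, ← pow_succ']
    rw [mul_smul_comm, hAB, ← mul_assoc, ← pow_succ']
    push_cast
    module

lemma L1 (n : ℕ) : (Jdiag N + (n : ℂ) • (1 + Amat N μ)⁻¹) * (1 + Amat N μ) ^ n
    = (1 + Amat N μ) ^ n * (Jdiag N + (n : ℂ) • 1) := by
  cases n with
  | zero => simp
  | succ m =>
    rw [add_mul, smul_mul_assoc, pow_succ', ← mul_assoc ((1 + Amat N μ)⁻¹), Binv_mul,
      one_mul, ← pow_succ', L0, mul_add, mul_smul_comm, mul_one]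
    have : Amat N μ * (1 + Amat N μ) ^ m + (1 + Amat N μ) ^ m = (1 + Amat N μ) ^ (m+1) := by
      rw [pow_succ', one_add_mul]; abel
    push_cast
    rw [← this]
    module

lemma Jconj : (Jdiag N)ᴴ = Jdiag N := by
  ext j k
  by_cases h : j = k
  · subst h
    simp [Jdiag, Matrix.conjTranspose_apply, Matrix.diagonal_apply_eq]
  · simp [Jdiag, Matrix.conjTranspose_apply, Matrix.diagonal_apply_ne, h, Ne.symm h]

lemma L1' (n : ℕ) : (Jdiag N + (n : ℂ) • 1) * (1 + (Amat N μ)ᴴ) ^ n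
    = (1 + (Amat N μ)ᴴ) ^ n * (Jdiag N + (n : ℂ) • (1 + (Amat N μ)ᴴ)⁻¹) := by
  have h := congrArg Matrix.conjTranspose (L1 N μ n)
  simp only [Matrix.conjTranspose_mul, Matrix.conjTranspose_add, Matrix.conjTranspose_smul,
    Matrix.conjTranspose_one, Matrix.conjTranspose_pow, Matrix.conjTranspose_nonsing_inv,
    Jconj, star_natCast] at h
  exact h.symm

lemma JT_comm (c : ℂ) : (Jdiag N + c • 1) * Tmat N δ = Tmat N δ * (Jdiag N + c • 1) := by
  have h : Jdiag N * Tmat N δ = Tmat N δ * Jdiag N := by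
    simp [Jdiag, Tmat, Matrix.diagonal_mul_diagonal, mul_comm]
  rw [add_mul, mul_add, smul_mul_assoc, mul_smul_comm, one_mul, mul_one, h]

end AuxLemmas

/-- `𝔍^{(λ)}(x) = J + (x+λ)(I+A)⁻¹` symmetrizes the matrix Charlier
weight: `𝔍^{(λ)}(x) W^{(λ)}(x) = W^{(λ)}(x) 𝔍^{(λ)}(x)^*`. -/
theorem Jfrak_symmetry (N : ℕ) (hN : 1 ≤ N) (a : ℝ) (ha : 0 < a)
    (μ : ℕ → ℝ) (hμ : ∀ j : ℕ, 1 ≤ j → j ≤ N → 0 < μ j)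
    (δ : ℕ → ℕ → ℝ) (hδ : ∀ lam k : ℕ, 1 ≤ k → k ≤ N → 0 < δ lam k) :
    ∀ lam x : ℕ,
      (Jdiag N + ((x : ℂ) + (lam : ℂ)) • (1 + Amat N μ)⁻¹) * Wch N a μ (δ lam) lam x
        = Wch N a μ (δ lam) lam x
            * (Jdiag N + ((x : ℂ) + (lam : ℂ)) • (1 + Amat N μ)⁻¹)ᴴ ∧
      (Jdiag N + ((x : ℂ) + (lam : ℂ)) • (1 + Amat N μ)⁻¹)
          * ((1 + Amat N μ) ^ (x + lam) * Tmat N (δ lam) * (1 + (Amat N μ)ᴴ) ^ (x + lam))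
        = ((1 + Amat N μ) ^ (x + lam) * Tmat N (δ lam) * (1 + (Amat N μ)ᴴ) ^ (x + lam))
            * (Jdiag N + ((x : ℂ) + (lam : ℂ)) • (1 + (Amat N μ)ᴴ)⁻¹) := by
  intro lam x
  have hc : ((x : ℂ) + (lam : ℂ)) = ((x + lam : ℕ) : ℂ) := by push_cast; ring
  rw [hc]
  have key : (Jdiag N + ((x + lam : ℕ) : ℂ) • (1 + Amat N μ)⁻¹)
        * ((1 + Amat N μ) ^ (x + lam) * Tmat N (δ lam) * (1 + (Amat N μ)ᴴ) ^ (x + lam))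
      = ((1 + Amat N μ) ^ (x + lam) * Tmat N (δ lam) * (1 + (Amat N μ)ᴴ) ^ (x + lam))
        * (Jdiag N + ((x + lam : ℕ) : ℂ) • (1 + (Amat N μ)ᴴ)⁻¹) := by
    calc (Jdiag N + ((x + lam : ℕ) : ℂ) • (1 + Amat N μ)⁻¹)
        * ((1 + Amat N μ) ^ (x + lam) * Tmat N (δ lam) * (1 + (Amat N μ)ᴴ) ^ (x + lam))
        = ((Jdiag N + ((x + lam : ℕ) : ℂ) • (1 + Amat N μ)⁻¹) * (1 + Amat N μ) ^ (x + lam))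
            * Tmat N (δ lam) * (1 + (Amat N μ)ᴴ) ^ (x + lam) := by
          simp only [mul_assoc]
      _ = ((1 + Amat N μ) ^ (x + lam) * (Jdiag N + ((x + lam : ℕ) : ℂ) • 1))
            * Tmat N (δ lam) * (1 + (Amat N μ)ᴴ) ^ (x + lam) := by rw [L1]
      _ = (1 + Amat N μ) ^ (x + lam)
            * (Tmat N (δ lam) * (Jdiag N + ((x + lam : ℕ) : ℂ) • 1))
            * (1 + (Amat N μ)ᴴ) ^ (x + lam) := by
          rw [mul_assoc ((1 + Amat N μ) ^ (x + lam)), JT_comm]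
      _ = (1 + Amat N μ) ^ (x + lam) * Tmat N (δ lam)
            * ((Jdiag N + ((x + lam : ℕ) : ℂ) • 1) * (1 + (Amat N μ)ᴴ) ^ (x + lam)) := by
          simp only [mul_assoc]
      _ = (1 + Amat N μ) ^ (x + lam) * Tmat N (δ lam)
            * ((1 + (Amat N μ)ᴴ) ^ (x + lam)
              * (Jdiag N + ((x + lam : ℕ) : ℂ) • (1 + (Amat N μ)ᴴ)⁻¹)) := by rw [L1']
      _ = ((1 + Amat N μ) ^ (x + lam) * Tmat N (δ lam) * (1 + (Amat N μ)ᴴ) ^ (x + lam))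
            * (Jdiag N + ((x + lam : ℕ) : ℂ) • (1 + (Amat N μ)ᴴ)⁻¹) := by
          simp only [mul_assoc]
  refine ⟨?_, key⟩
  have hXH : (Jdiag N + ((x + lam : ℕ) : ℂ) • (1 + Amat N μ)⁻¹)ᴴ
      = Jdiag N + ((x + lam : ℕ) : ℂ) • (1 + (Amat N μ)ᴴ)⁻¹ := by
    rw [Matrix.conjTranspose_add, Matrix.conjTranspose_smul, Matrix.conjTranspose_nonsing_inv,
      Matrix.conjTranspose_add, Matrix.conjTranspose_one, Jconj, star_natCast]
  simp only [Wch]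
  rw [hXH, mul_smul_comm, key, smul_mul_assoc]
end
end
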